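/- arXiv:2207.06335 — 4 statements merged into one kernel-verified Lean document; each statement's English description precedes it below -/
import Mathlib

section
/- Let V be a finite-dimensional real normed vector space. Suppose a function φ : V → ℤ admits two decompositions as finite integer combinations of indicator functions of nonempty compact convex sets, i.e. Σ_{α∈A} C_α·1_{X_α}(v) = Σ_{β∈B} D_β·1_{Y_β}(v) for all v ∈ V, where A and B are finite index sets, C_α, D_β ∈ ℤ, and each X_α and each Y_β is a nonempty compact convex subset of V. Then Σ_{α∈A} C_α = Σ_{β∈B} D_β. -/
/-!
Write `χ(Z) ∈ {0, 1}` for the indicator of `Z ≠ ∅`. We show more generally that, for compact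
convex sets `Zᵢ`, `∑ Eᵢ 1_{Zᵢ} = 0` implies `∑ Eᵢ χ(Zᵢ) = 0`, by induction on the dimension.
In dimension `0` the sets are points or empty, so `1_{Zᵢ} = χ(Zᵢ)`. Otherwise take a nonzero
linear functional `g`: the fibre `g⁻¹(t)` is a translate of `ker g`, and the induction
hypothesis applied to the slices `Zᵢ ∩ g⁻¹(t)` gives `∑ Eᵢ 1_{g(Zᵢ)}(t) = 0` for every `t`.
This reduces the claim to compact intervals `g(Zᵢ)` of `ℝ`, where `χ(S)` is the jump
`1_S(a) - 1_S(a⁻)` summed over all `a`, a quantity that is linear in `1_S`.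
-/

open Module Filter Topology Set

open Classical in
noncomputable def eulerChar {α : Type*} (s : Set α) : ℤ := if s.Nonempty then 1 else 0

theorem eulerChar_of_nonempty {α : Type*} {s : Set α} (hs : s.Nonempty) : eulerChar s = 1 :=
  if_pos hs

theorem eulerChar_image {α β : Type*} (f : α → β) (s : Set α) :
    eulerChar (f '' s) = eulerChar s := by
  rw [eulerChar, eulerChar, image_nonempty]

theorem indicator_one_eq_eulerChar {α : Type*} [Subsingleton α] (s : Set α) (a : α) :
    s.indicator 1 a = eulerChar s := by
  by_cases hs : s.Nonempty
  · obtain ⟨b, hb⟩ := hs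
    rw [indicator_of_mem (Subsingleton.elim b a ▸ hb), eulerChar_of_nonempty ⟨b, hb⟩, Pi.one_apply]
  · rw [indicator_of_notMem fun ha => hs ⟨a, ha⟩, eulerChar, if_neg hs]

theorem finite_setOf_exists_isLeast {α ι : Type*} [PartialOrder α] [Finite ι] (S : ι → Set α) :
    {a | ∃ i, IsLeast (S i) a}.Finite := by
  rw [ofPred_exists]
  exact finite_iUnion fun i => Set.Subsingleton.finite fun a ha b hb => ha.unique hb

section OrderTopology

variable {α : Type*} [LinearOrder α] [TopologicalSpace α] [OrderTopology α]

open Classical in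
theorem eulerChar_eq_sum_isLeast {s : Set α} (hs : IsCompact s) {F : Finset α}
    (hF : ∀ a, IsLeast s a → a ∈ F) : eulerChar s = ∑ a ∈ F, if IsLeast s a then 1 else 0 := by
  rcases s.eq_empty_or_nonempty with rfl | hne
  · simp [eulerChar, IsLeast]
  · obtain ⟨a, ha⟩ := hs.exists_isLeast hne
    rw [eulerChar_of_nonempty hne, Finset.sum_eq_single_of_mem a (hF a ha)
      fun b _ hba => if_neg fun hb => hba (hb.unique ha), if_pos ha]

open Classical in
theorem eventually_indicator_sub_indicator_nhdsLT {s : Set α} (hs : IsClosed s)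
    (hs' : s.OrdConnected) (a : α) :
    ∀ᶠ b in 𝓝[<] a, s.indicator (1 : α → ℤ) a - s.indicator 1 b = if IsLeast s a then 1 else 0 := by
  by_cases ha : a ∈ s
  · by_cases hleast : IsLeast s a
    · filter_upwards [self_mem_nhdsWithin] with b (hb : b < a)
      have hbs : b ∉ s := fun hbs => (hleast.2 hbs).not_gt hb
      simp [ha, hbs, hleast]
    · obtain ⟨c, hc, hca⟩ : ∃ c ∈ s, c < a := by
        simpa [IsLeast, ha, lowerBounds] using hleast
      filter_upwards [Ioo_mem_nhdsLT hca] with b hb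
      have hbs : b ∈ s := hs'.out hc ha (Ioo_subset_Icc_self hb)
      simp [ha, hbs, hleast]
  · filter_upwards [nhdsWithin_le_nhds (hs.isOpen_compl.mem_nhds ha)] with b (hb : b ∉ s)
    have hleast : ¬IsLeast s a := fun h => ha h.1
    simp [ha, hb, hleast]

theorem sum_mul_eulerChar_eq_zero_of_ordConnected [DenselyOrdered α] [NoMinOrder α]
    {ι : Type*} [Fintype ι] (E : ι → ℤ) (S : ι → Set α) (hcpt : ∀ i, IsCompact (S i))
    (hconn : ∀ i, (S i).OrdConnected) (h : ∀ a, ∑ i, E i * (S i).indicator 1 a = 0) :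
    ∑ i, E i * eulerChar (S i) = 0 := by
  classical
  set F := (finite_setOf_exists_isLeast S).toFinset
  have hjump : ∀ a, ∑ i, E i * (if IsLeast (S i) a then 1 else 0) = 0 := by
    intro a
    obtain ⟨b, hb⟩ := (eventually_all.mpr fun i =>
      eventually_indicator_sub_indicator_nhdsLT (hcpt i).isClosed (hconn i) a).exists
    simp only [← hb, mul_sub, Finset.sum_sub_distrib, h, sub_zero]
  calc ∑ i, E i * eulerChar (S i)
      = ∑ i, ∑ a ∈ F, E i * (if IsLeast (S i) a then 1 else 0) := by
        refine Finset.sum_congr rfl fun i _ => ?_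
        rw [eulerChar_eq_sum_isLeast (hcpt i) fun a ha =>
          (finite_setOf_exists_isLeast S).mem_toFinset.mpr ⟨i, ha⟩, Finset.mul_sum]
    _ = 0 := by rw [Finset.sum_comm]; exact Finset.sum_eq_zero fun a _ => hjump a

end OrderTopology

theorem eulerChar_preimage_add_ker {R M N : Type*} [Ring R] [AddCommGroup M] [Module R M]
    [AddCommGroup N] [Module R N] (f : M →ₗ[R] N) (c : M) (s : Set M) :
    eulerChar ((fun w : LinearMap.ker f => c + w) ⁻¹' s) = (f '' s).indicator 1 (f c) := by
  by_cases h : f c ∈ f '' s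
  · rw [indicator_of_mem h, Pi.one_apply]
    obtain ⟨v, hv, hfv⟩ := h
    exact eulerChar_of_nonempty ⟨⟨v - c, by simp [hfv]⟩, by simpa using hv⟩
  · refine (if_neg ?_).trans (indicator_of_notMem h _).symm
    rintro ⟨w, hw⟩
    exact h ⟨_, hw, by simp⟩

theorem isCompact_preimage_add_ker {V W : Type*} [NormedAddCommGroup V] [NormedSpace ℝ V]
    [FiniteDimensional ℝ V] [AddCommGroup W] [Module ℝ W] (f : V →ₗ[ℝ] W) (c : V) {s : Set V}
    (hs : IsCompact s) : IsCompact ((fun w : LinearMap.ker f => c + w) ⁻¹' s) :=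
  ((Homeomorph.addLeft c).isClosedEmbedding.comp
    (LinearMap.ker f).closed_of_finiteDimensional.isClosedEmbedding_subtypeVal).isCompact_preimage hs

theorem Convex.preimage_add_ker {𝕜 V W : Type*} [Semiring 𝕜] [PartialOrder 𝕜]
    [AddCommGroup V] [Module 𝕜 V] [AddCommGroup W] [Module 𝕜 W] (f : V →ₗ[𝕜] W) (c : V)
    {s : Set V} (hs : Convex 𝕜 s) : Convex 𝕜 ((fun w : LinearMap.ker f => c + w) ⁻¹' s) :=
  (hs.translate_preimage_right c).linear_preimage (LinearMap.ker f).subtype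

theorem sum_mul_eulerChar_eq_zero {V : Type*} [NormedAddCommGroup V] [NormedSpace ℝ V]
    [FiniteDimensional ℝ V] {ι : Type*} [Fintype ι] (E : ι → ℤ) (Z : ι → Set V)
    (hcpt : ∀ i, IsCompact (Z i)) (hcvx : ∀ i, Convex ℝ (Z i))
    (h : ∀ v, ∑ i, E i * (Z i).indicator 1 v = 0) :
    ∑ i, E i * eulerChar (Z i) = 0 := by
  obtain ⟨n, hn⟩ : ∃ n, finrank ℝ V = n := ⟨_, rfl⟩
  induction n generalizing V with
  | zero =>
    have : Subsingleton V := finrank_zero_iff.mp hn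
    simpa only [indicator_one_eq_eulerChar] using h 0
  | succ n ih =>
    have : Nontrivial V := (finrank_pos_iff (R := ℝ)).mp (by omega)
    obtain ⟨g, hg⟩ := exists_ne (0 : Dual ℝ V)
    have hslice : ∀ t, ∑ i, E i * (g '' Z i).indicator 1 t = 0 := by
      intro t
      obtain ⟨c, rfl⟩ := g.surjective hg t
      simpa only [eulerChar_preimage_add_ker] using
        ih _ (fun i => isCompact_preimage_add_ker g c (hcpt i))
          (fun i => (hcvx i).preimage_add_ker g c) (fun w => h _)
          (by linarith [Dual.finrank_ker_add_one_of_ne_zero hg])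
    simpa only [eulerChar_image] using
      sum_mul_eulerChar_eq_zero_of_ordConnected E _
        (fun i => (hcpt i).image g.continuous_of_finiteDimensional)
        (fun i => convex_iff_ordConnected.mp ((hcvx i).linear_image g)) hslice

/-- **Well-definedness of the Euler integral.**
If a function `φ : V → ℤ` admits two decompositions as finite integer combinations of
indicator functions of nonempty compact convex subsets of a finite-dimensional real
normed vector space `V`, then the total coefficient sums agree. -/
theorem euler_integral_well_defined
    (V : Type*) [NormedAddCommGroup V] [NormedSpace ℝ V] [FiniteDimensional ℝ V]
    {A B : Type*} [Fintype A] [Fintype B]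
    (C : A → ℤ) (D : B → ℤ) (X : A → Set V) (Y : B → Set V)
    (hXne : ∀ a, (X a).Nonempty) (hXcpt : ∀ a, IsCompact (X a)) (hXcvx : ∀ a, Convex ℝ (X a))
    (hYne : ∀ b, (Y b).Nonempty) (hYcpt : ∀ b, IsCompact (Y b)) (hYcvx : ∀ b, Convex ℝ (Y b))
    (h : ∀ v : V, ∑ a, C a * (X a).indicator 1 v = ∑ b, D b * (Y b).indicator 1 v) :
    ∑ a, C a = ∑ b, D b := by
  have hsum := sum_mul_eulerChar_eq_zero (Sum.elim C (-D)) (Sum.elim X Y)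
    (Sum.rec hXcpt hYcpt) (Sum.rec hXcvx hYcvx) fun v => by
      simp [Fintype.sum_sum_type, h v]
  simpa [Fintype.sum_sum_type, eulerChar_of_nonempty, hXne, hYne, ← sub_eq_add_neg,
    sub_eq_zero] using hsum
end

section
/- Let V be a finite-dimensional real normed vector space and let φ : V → ℤ be a PL-constructible function with compact support. Then φ can be written as a finite sum φ = Σ_{α∈A} C_α·1_{X_α}, where A is a finite index set, each X_α is a compact convex polytope (the convex hull of a nonempty finite subset of V), and each C_α ∈ ℤ is nonzero. -/
/-- A locally closed convex polytope: a finite intersection of open or closed affine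
half-spaces, i.e. sets `{v | f v < c}` or `{v | f v ≤ c}` for linear functionals `f`. -/
def IsLocallyClosedPolytope {V : Type*} [NormedAddCommGroup V] [NormedSpace ℝ V]
    (P : Set V) : Prop :=
  ∃ (k : ℕ) (f : Fin k → (V →ₗ[ℝ] ℝ)) (c : Fin k → ℝ) (strict : Fin k → Bool),
    P = ⋂ j, (if strict j then {v : V | f j v < c j} else {v : V | f j v ≤ c j})

/-- A function `φ : V → ℤ` is PL-constructible if there is a locally finite covering of
`V` by locally closed convex polytopes on each of which `φ` is constant. -/
def IsPLConstructible {V : Type*} [NormedAddCommGroup V] [NormedSpace ℝ V]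
    (φ : V → ℤ) : Prop :=
  ∃ (ι : Type) (P : ι → Set V),
    (∀ a, IsLocallyClosedPolytope (P a)) ∧
    (⋃ a, P a) = Set.univ ∧
    LocallyFinite P ∧
    ∀ a, ∀ x ∈ P a, ∀ y ∈ P a, φ x = φ y

/-!
Inside a compact polytope `B ⊇ supp φ` only finitely many pieces of the cover matter, and `φ`
is constant on the cells cut out of `B` by the finitely many hyperplanes bounding them, so `φ`
is an integer combination of indicators of such cells. A cell arises from `B` by intersecting
with closed half-spaces, up to differences that account for strict inequalities and
hyperplanes. Finally, a compact polytope cut by a closed half-space `{f ≤ c}` is again a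
compact polytope: it is spanned by the vertices with `f ≤ c` and the points where `{f = c}`
meets the edges joining a vertex with `f ≤ c` to one with `f > c`.
-/

open Set

section CutPoint

variable {𝕜 E : Type*} [Field 𝕜] [AddCommGroup E] [Module 𝕜 E] {f : E →ₗ[𝕜] 𝕜} {c : 𝕜}

variable (f c) in
/-- Where the line through `y` and `z` meets the hyperplane `{f = c}` (junk if `f y = f z`). -/
def cutPoint (y z : E) : E := y + ((c - f y) / (f z - f y)) • (z - y)

lemma cutPoint_neg_swap {y z : E} (h : f y ≠ f z) :
    cutPoint (-f) (-c) z y = cutPoint f c y z := by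
  have : f z - f y ≠ 0 := sub_ne_zero.2 h.symm
  have hs : (-c - (-f) z) / ((-f) y - (-f) z) = 1 - (c - f y) / (f z - f y) := by
    rw [LinearMap.neg_apply, LinearMap.neg_apply, neg_sub_neg, neg_sub_neg]
    field_simp
    ring
  rw [cutPoint, hs, cutPoint]
  module

lemma apply_cutPoint {y z : E} (h : f y ≠ f z) : f (cutPoint f c y z) = c := by
  have : f z - f y ≠ 0 := sub_ne_zero.2 h.symm
  simp only [cutPoint, map_add, map_smul, map_sub, smul_eq_mul]
  field_simp
  ring

variable [LinearOrder 𝕜] [IsStrictOrderedRing 𝕜]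

/-- Central projection from `y` to `{f = c}` maps segments into segments; the weights get
rescaled by the heights `f zᵢ - f y`. -/
lemma cutPoint_mem_segment_cutPoint {y z₁ z₂ z : E} (h₁ : f y < f z₁) (h₂ : f y < f z₂)
    (hz : z ∈ segment 𝕜 z₁ z₂) :
    cutPoint f c y z ∈ segment 𝕜 (cutPoint f c y z₁) (cutPoint f c y z₂) := by
  obtain ⟨a, b, ha, hb, hab, rfl⟩ := hz
  obtain rfl : b = 1 - a := eq_sub_of_add_eq' hab
  have hd₁ : 0 < f z₁ - f y := sub_pos.2 h₁
  have hd₂ : 0 < f z₂ - f y := sub_pos.2 h₂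
  set D := a * (f z₁ - f y) + (1 - a) * (f z₂ - f y)
  have hd : f (a • z₁ + (1 - a) • z₂) - f y = D := by
    simp only [map_add, map_smul, smul_eq_mul, D]
    ring
  have hD : 0 < D := by
    rcases ha.eq_or_lt with rfl | ha
    · simpa [D] using hd₂
    · positivity
  refine ⟨a * (f z₁ - f y) / D, (1 - a) * (f z₂ - f y) / D, by positivity, by positivity,
    by rw [← add_div, div_self hD.ne'], ?_⟩
  simp only [cutPoint]
  rw [hd, ← sub_eq_zero]
  match_scalars <;> field_simp <;> ring

lemma cutPoint_mem_segment {y z : E} (hy : f y ≤ c) (hz : c < f z) :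
    cutPoint f c y z ∈ segment 𝕜 y z := by
  have hd : 0 ≤ f z - f y := by linarith
  rw [segment_eq_image']
  exact ⟨_, ⟨div_nonneg (sub_nonneg.2 hy) hd, div_le_one_of_le₀ (by linarith) hd⟩, rfl⟩

lemma mem_segment_cutPoint {x y z : E} (hx : f x ≤ c) (h : f y < f z)
    (hxyz : x ∈ segment 𝕜 y z) : x ∈ segment 𝕜 y (cutPoint f c y z) := by
  rw [segment_eq_image'] at hxyz ⊢
  obtain ⟨t, ⟨ht0, -⟩, rfl⟩ := hxyz
  set s := (c - f y) / (f z - f y)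
  have hts : t ≤ s := by
    simp only [map_add, map_smul, map_sub, smul_eq_mul] at hx
    rw [le_div_iff₀ (sub_pos.2 h)]
    linarith
  refine ⟨t / s, ⟨div_nonneg ht0 (ht0.trans hts), div_le_one_of_le₀ hts (ht0.trans hts)⟩, ?_⟩
  simp only [cutPoint, add_sub_cancel_left, smul_smul]
  rw [div_mul_cancel_of_imp fun hs => le_antisymm (hs ▸ hts) ht0]

lemma cutPoint_mem_convexHull_image {y z : E} {Z : Set E} (hZ : ∀ w ∈ Z, f y < f w)
    (hz : z ∈ convexHull 𝕜 Z) : cutPoint f c y z ∈ convexHull 𝕜 (cutPoint f c y '' Z) := by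
  have hconv :
      Convex 𝕜 {w | f y < f w ∧ cutPoint f c y w ∈ convexHull 𝕜 (cutPoint f c y '' Z)} := by
    rintro w₁ ⟨hw₁, hc₁⟩ w₂ ⟨hw₂, hc₂⟩ a b ha hb hab
    exact ⟨convex_halfSpace_gt f.isLinear (f y) hw₁ hw₂ ha hb hab,
      (convex_convexHull 𝕜 _).segment_subset hc₁ hc₂
        (cutPoint_mem_segment_cutPoint hw₁ hw₂ ⟨a, b, ha, hb, hab, rfl⟩)⟩
  have hsub : Z ⊆ {w | f y < f w ∧ cutPoint f c y w ∈ convexHull 𝕜 (cutPoint f c y '' Z)} :=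
    fun w hw => ⟨hZ w hw, subset_convexHull 𝕜 _ (mem_image_of_mem _ hw)⟩
  exact (convexHull_min hsub hconv hz).2

lemma cutPoint_mem_convexHull_image2 {Y Z : Set E} (hY : ∀ y ∈ Y, f y ≤ c)
    (hZ : ∀ z ∈ Z, c < f z) {y z : E} (hy : y ∈ convexHull 𝕜 Y) (hz : z ∈ convexHull 𝕜 Z) :
    cutPoint f c y z ∈ convexHull 𝕜 (image2 (cutPoint f c) Y Z) := by
  have hfy : f y ≤ c := convexHull_min hY (convex_halfSpace_le f.isLinear c) hy
  refine convexHull_min ?_ (convex_convexHull 𝕜 _)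
    (cutPoint_mem_convexHull_image (fun w hw => hfy.trans_lt (hZ w hw)) hz)
  rintro _ ⟨w, hw, rfl⟩
  have hY' : ∀ v ∈ Y, (-f) w < (-f) v := fun v hv => by
    simpa only [LinearMap.neg_apply, neg_lt_neg_iff] using (hY v hv).trans_lt (hZ w hw)
  rw [← cutPoint_neg_swap (hfy.trans_lt (hZ w hw)).ne]
  refine convexHull_mono ?_ (cutPoint_mem_convexHull_image (c := -c) hY' hy)
  rintro _ ⟨v, hv, rfl⟩
  exact ⟨v, hv, w, hw, (cutPoint_neg_swap ((hY v hv).trans_lt (hZ w hw)).ne).symm⟩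

theorem convexHull_inter_halfSpace_le (s : Set E) (f : E →ₗ[𝕜] 𝕜) (c : 𝕜) :
    convexHull 𝕜 s ∩ {x | f x ≤ c} = convexHull 𝕜
      ({x ∈ s | f x ≤ c} ∪ image2 (cutPoint f c) {x ∈ s | f x ≤ c} {x ∈ s | c < f x}) := by
  set L := {x ∈ s | f x ≤ c}
  set U := {x ∈ s | c < f x}
  refine subset_antisymm ?_ (convexHull_min ?_ ((convex_convexHull 𝕜 s).inter
    (convex_halfSpace_le f.isLinear c)))
  · rintro x ⟨hx, hfx⟩
    have hs : s = L ∪ U := by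
      ext x
      simp only [mem_union, mem_sep_iff, L, U, ← and_or_left, le_or_gt, and_true]
    have hL : ∀ y ∈ L, f y ≤ c := fun y hy => hy.2
    have hU : ∀ z ∈ U, c < f z := fun z hz => hz.2
    rcases U.eq_empty_or_nonempty with hU₀ | hU₀
    · rw [hs, hU₀, union_empty] at hx
      exact convexHull_mono subset_union_left hx
    rcases L.eq_empty_or_nonempty with hL₀ | hL₀
    · rw [hs, hL₀, empty_union] at hx
      exact absurd (convexHull_min hU (convex_halfSpace_gt f.isLinear c) hx) hfx.not_gt
    rw [hs, convexHull_union hL₀ hU₀] at hx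
    obtain ⟨y, hy, z, hz, hxyz⟩ := mem_convexJoin.1 hx
    have hfy : f y ≤ c := convexHull_min hL (convex_halfSpace_le f.isLinear c) hy
    have hfz : c < f z := convexHull_min hU (convex_halfSpace_gt f.isLinear c) hz
    exact (convex_convexHull 𝕜 _).segment_subset (convexHull_mono subset_union_left hy)
      (convexHull_mono subset_union_right (cutPoint_mem_convexHull_image2 hL hU hy hz))
      (mem_segment_cutPoint hfx (hfy.trans_lt hfz) hxyz)
  · rintro x (⟨hx, hfx⟩ | ⟨y, ⟨hy, hfy⟩, z, ⟨hz, hfz⟩, rfl⟩)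
    · exact ⟨subset_convexHull 𝕜 s hx, hfx⟩
    · exact ⟨(convex_convexHull 𝕜 s).segment_subset (subset_convexHull 𝕜 s hy)
        (subset_convexHull 𝕜 s hz) (cutPoint_mem_segment hfy hfz),
        (apply_cutPoint (hfy.trans_lt hfz).ne).le⟩

theorem Finset.exists_convexHull_eq_inter_halfSpace_le (S : Finset E)
    (f : E →ₗ[𝕜] 𝕜) (c : 𝕜) :
    ∃ T : Finset E, convexHull 𝕜 (T : Set E) = convexHull 𝕜 (S : Set E) ∩ {x | f x ≤ c} := by
  have hL : {x ∈ (S : Set E) | f x ≤ c}.Finite := S.finite_toSet.sep _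
  have hU : {x ∈ (S : Set E) | c < f x}.Finite := S.finite_toSet.sep _
  refine ⟨(hL.union (hL.image2 (cutPoint f c) hU)).toFinset, ?_⟩
  rw [Set.Finite.coe_toFinset, convexHull_inter_halfSpace_le]

end CutPoint

section PolytopeIndicators

variable {V : Type*} [AddCommGroup V] [Module ℝ V]

variable (V) in
def polytopeIndicators : Submodule ℤ (V → ℤ) :=
  Submodule.span ℤ {g | ∃ S : Finset V, S.Nonempty ∧ g = (convexHull ℝ (S : Set V)).indicator 1}

lemma indicator_convexHull_mem_polytopeIndicators (S : Finset V) :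
    (convexHull ℝ (S : Set V)).indicator 1 ∈ polytopeIndicators V := by
  rcases S.eq_empty_or_nonempty with rfl | hS
  · rw [Finset.coe_empty, convexHull_empty, indicator_empty]
    exact (polytopeIndicators V).zero_mem
  · exact Submodule.subset_span ⟨S, hS, rfl⟩

def HasPolytopeTraces (A : Set V) : Prop :=
  ∀ S : Finset V, (convexHull ℝ (S : Set V) ∩ A).indicator 1 ∈ polytopeIndicators V

lemma hasPolytopeTraces_univ : HasPolytopeTraces (univ : Set V) := fun S => by
  simpa using indicator_convexHull_mem_polytopeIndicators S

variable {A : Set V}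

lemma HasPolytopeTraces.inter_halfSpace_le (hA : HasPolytopeTraces A) (f : V →ₗ[ℝ] ℝ) (c : ℝ) :
    HasPolytopeTraces (A ∩ {v | f v ≤ c}) := fun S => by
  obtain ⟨T, hT⟩ := S.exists_convexHull_eq_inter_halfSpace_le f c
  rw [← inter_assoc, inter_right_comm, ← hT]
  exact hA T

lemma HasPolytopeTraces.inter_hyperplane (hA : HasPolytopeTraces A) (f : V →ₗ[ℝ] ℝ) (c : ℝ) :
    HasPolytopeTraces (A ∩ {v | f v = c}) := by
  convert (hA.inter_halfSpace_le f c).inter_halfSpace_le (-f) (-c) using 1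
  ext v
  simp only [mem_inter_iff, mem_ofPred_eq, LinearMap.neg_apply, neg_le_neg_iff, and_assoc,
    le_antisymm_iff]

lemma HasPolytopeTraces.inter_halfSpace_lt (hA : HasPolytopeTraces A) (f : V →ₗ[ℝ] ℝ) (c : ℝ) :
    HasPolytopeTraces (A ∩ {v | f v < c}) := fun S => by
  have hdiff : convexHull ℝ (S : Set V) ∩ (A ∩ {v | f v < c}) =
      (convexHull ℝ (S : Set V) ∩ (A ∩ {v | f v ≤ c})) \
        (convexHull ℝ (S : Set V) ∩ (A ∩ {v | f v = c})) := by
    ext v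
    simp only [mem_sdiff, mem_inter_iff, mem_ofPred_eq, lt_iff_le_and_ne]
    tauto
  have hsub : convexHull ℝ (S : Set V) ∩ (A ∩ {v | f v = c}) ⊆
      convexHull ℝ (S : Set V) ∩ (A ∩ {v | f v ≤ c}) :=
    inter_subset_inter_right _ (inter_subset_inter_right _ fun v hv => le_of_eq hv)
  rw [hdiff, indicator_sdiff hsub]
  exact sub_mem (hA.inter_halfSpace_le f c S) (hA.inter_hyperplane f c S)

lemma HasPolytopeTraces.inter_compare (hA : HasPolytopeTraces A) (f : V →ₗ[ℝ] ℝ) (c : ℝ)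
    (o : Ordering) : HasPolytopeTraces (A ∩ {v | compare (f v) c = o}) := by
  cases o
  · simpa only [compare_lt_iff_lt] using hA.inter_halfSpace_lt f c
  · simpa only [compare_eq_iff_eq] using hA.inter_hyperplane f c
  · simpa only [compare_gt_iff_gt, LinearMap.neg_apply, neg_lt_neg_iff]
      using hA.inter_halfSpace_lt (-f) (-c)

noncomputable def signVector {J : Type*} (F : J → V →ₗ[ℝ] ℝ) (C : J → ℝ) (v : V) : J → Ordering :=
  fun j => compare (F j v) (C j)

lemma hasPolytopeTraces_signVector_preimage {J : Type*} [Finite J] (F : J → V →ₗ[ℝ] ℝ)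
    (C : J → ℝ) (σ : J → Ordering) : HasPolytopeTraces (signVector F C ⁻¹' {σ}) := by
  classical
  cases nonempty_fintype J
  have hcells : ∀ t : Finset J, HasPolytopeTraces {v | ∀ j ∈ t, compare (F j v) (C j) = σ j} := by
    intro t
    induction t using Finset.induction_on with
    | empty => simpa using hasPolytopeTraces_univ
    | insert j t _ ih =>
      convert ih.inter_compare (F j) (C j) (σ j) using 1
      ext v
      simp only [Finset.forall_mem_insert, mem_ofPred_eq, mem_inter_iff, and_comm]
  convert hcells Finset.univ using 1
  ext v
  simp [signVector, funext_iff]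

end PolytopeIndicators

lemma exists_eq_sum_indicator_preimage {X ι R : Type*} [Fintype ι] [Semiring R] (φ : X → R)
    (B : Set X) (g : X → ι) (h₀ : ∀ x ∉ B, φ x = 0)
    (hg : ∀ x ∈ B, ∀ y ∈ B, g x = g y → φ x = φ y) :
    ∃ a : ι → R, φ = ∑ i, a i • (B ∩ g ⁻¹' {i}).indicator 1 := by
  classical
  refine ⟨fun i => if h : (B ∩ g ⁻¹' {i}).Nonempty then φ h.some else 0, funext fun x => ?_⟩
  simp only [Finset.sum_apply, Pi.smul_apply, indicator_apply, mem_inter_iff, mem_preimage,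
    mem_singleton_iff, Pi.one_apply, smul_eq_mul, mul_ite, mul_one, mul_zero]
  by_cases hx : x ∈ B
  · have hne : (B ∩ g ⁻¹' {g x}).Nonempty := ⟨x, hx, rfl⟩
    simp only [hx, true_and, Finset.sum_ite_eq, Finset.mem_univ, if_true, dif_pos hne]
    exact hg _ hx _ hne.some_mem.1 hne.some_mem.2.symm
  · simp [hx, h₀ x hx]

lemma Submodule.exists_fin_sum_eq_of_mem_span {R M : Type*} [Semiring R] [AddCommMonoid M]
    [Module R M] {s : Set M} {m : M} (hm : m ∈ span R s) :
    ∃ (n : ℕ) (c : Fin n → R) (g : Fin n → M),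
      (∀ i, g i ∈ s) ∧ (∀ i, c i ≠ 0) ∧ ∑ i, c i • g i = m := by
  obtain ⟨c, hcs, rfl⟩ := mem_span_set.1 hm
  let e := c.support.equivFin
  refine ⟨_, fun i => c (e.symm i), fun i => e.symm i, fun i => hcs (e.symm i).2,
    fun i => Finsupp.mem_support_iff.1 (e.symm i).2, ?_⟩
  rw [Finsupp.sum, ← Finset.sum_coe_sort c.support]
  exact Fintype.sum_equiv e.symm _ (fun x => c x • (x : M)) fun i => rfl

section Normed

variable {V : Type*} [NormedAddCommGroup V] [NormedSpace ℝ V]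

lemma IsCompact.exists_finset_subset_convexHull [FiniteDimensional ℝ V] {K : Set V}
    (hK : IsCompact K) : ∃ S : Finset V, K ⊆ convexHull ℝ (S : Set V) := by
  obtain ⟨r, hr⟩ := hK.isBounded.subset_closedBall 0
  obtain ⟨S, hS, -⟩ :=
    (convex_closedBall (0 : V) r).exists_subset_interior_convexHull_finset_of_isCompact
      (isCompact_closedBall 0 r) Filter.univ_mem
  exact ⟨S, hr.trans (hS.trans interior_subset)⟩

lemma mem_iInter_halfSpaces_of_compare_eq {ι : Type*} {f : ι → V →ₗ[ℝ] ℝ} {c : ι → ℝ}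
    {strict : ι → Bool} {x y : V} (hxy : ∀ j, compare (f j x) (c j) = compare (f j y) (c j))
    (hx : x ∈ ⋂ j, if strict j then {v | f j v < c j} else {v | f j v ≤ c j}) :
    y ∈ ⋂ j, if strict j then {v | f j v < c j} else {v | f j v ≤ c j} := by
  simp only [mem_iInter] at hx ⊢
  intro j
  specialize hx j
  split_ifs at hx ⊢
  · rw [mem_ofPred_eq, ← compare_lt_iff_lt, ← hxy j, compare_lt_iff_lt]
    exact hx
  · rw [mem_ofPred_eq, ← compare_le_iff_le, ← hxy j, compare_le_iff_le]
    exact hx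

lemma IsPLConstructible.exists_eq_of_signVector_eq {φ : V → ℤ} (hφ : IsPLConstructible φ)
    {B : Set V} (hB : IsCompact B) :
    ∃ (J : Type) (_ : Finite J) (F : J → V →ₗ[ℝ] ℝ) (C : J → ℝ),
      ∀ x ∈ B, ∀ y ∈ B, signVector F C x = signVector F C y → φ x = φ y := by
  obtain ⟨ι, P, hpoly, hcover, hlf, hconst⟩ := hφ
  choose k f c strict hP using hpoly
  have := (hlf.finite_nonempty_inter_compact hB).to_subtype
  refine ⟨Σ a : {a | (P a ∩ B).Nonempty}, Fin (k a), inferInstance,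
    fun j => f j.1 j.2, fun j => c j.1 j.2, fun x hx y _ hxy => ?_⟩
  obtain ⟨a, hxa⟩ := mem_iUnion.1 (hcover ▸ mem_univ x)
  refine hconst a x hxa y ?_
  rw [hP] at hxa ⊢
  exact mem_iInter_halfSpaces_of_compare_eq
    (fun j => congrFun hxy ⟨⟨a, x, hP a ▸ hxa, hx⟩, j⟩) hxa

end Normed

/-- **Decomposition of compactly supported PL-constructible functions.**
Any PL-constructible `φ : V → ℤ` with compact support is a finite integer combination of
indicator functions of compact convex polytopes (convex hulls of nonempty finite sets),
with nonzero coefficients. -/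
theorem plConstructible_decomposition
    {V : Type*} [NormedAddCommGroup V] [NormedSpace ℝ V] [FiniteDimensional ℝ V]
    (φ : V → ℤ) (hφ : IsPLConstructible φ) (hsupp : HasCompactSupport φ) :
    ∃ (n : ℕ) (C : Fin n → ℤ) (S : Fin n → Finset V),
      (∀ a, (S a).Nonempty) ∧ (∀ a, C a ≠ 0) ∧
      ∀ v : V, φ v = ∑ a, C a * (convexHull ℝ (S a : Set V)).indicator 1 v := by
  classical
  obtain ⟨S₀, hS₀⟩ := hsupp.isCompact.exists_finset_subset_convexHull
  obtain ⟨J, _, F, C, hF⟩ :=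
    hφ.exists_eq_of_signVector_eq (S₀.finite_toSet.isCompact_convexHull ℝ)
  have := Fintype.ofFinite J
  obtain ⟨a, ha⟩ := exists_eq_sum_indicator_preimage φ _ (signVector F C)
    (fun v hv => image_eq_zero_of_notMem_tsupport fun h => hv (hS₀ h)) hF
  have hmem : φ ∈ polytopeIndicators V := by
    rw [ha]
    exact Submodule.sum_mem _ fun σ _ =>
      Submodule.smul_mem _ _ (hasPolytopeTraces_signVector_preimage F C σ S₀)
  obtain ⟨n, c, g, hg, hc, hsum⟩ := Submodule.exists_fin_sum_eq_of_mem_span hmem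
  choose S hS hgS using hg
  refine ⟨n, c, S, hS, hc, fun v => ?_⟩
  simp [← hsum, Finset.sum_apply, hgS]
end

section
/- Let V be a finite-dimensional real normed vector space, let A be a finite index set, let (X_α)_{α∈A} be compact convex polytopes in V (each the convex hull of a nonempty finite subset of V), and let C_α ∈ ℤ. Then the function φ = Σ_{α∈A} C_α·1_{X_α} is PL-constructible: there exists a finite family (P_b)_{b∈B} of locally closed convex sets, each a finite intersection of open or closed affine half-spaces, which covers V and is such that φ is constant on each P_b. -/
/-!
Each polytope `conv S` is the image of the standard simplex under a linear map, hence the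
projection of a set cut out by finitely many affine inequalities `f ≤ c`; Fourier–Motzkin
elimination shows that such projections are again cut out by finitely many inequalities. Choosing,
for every inequality with `f ≠ 0` among those describing the `X_α`, one of the sides `f ≤ c` or
`f > c` gives finitely many cells covering `V`, each of the required shape, and on each cell
membership in every `X_α`, hence `φ`, is constant.
-/

open Set

theorem nonempty_upperBounds_inter_lowerBounds_of_finite {α : Type*}
    [ConditionallyCompleteLinearOrder α] [Nonempty α] {L U : Set α} (hL : L.Finite)
    (hU : U.Finite) (h : ∀ l ∈ L, ∀ r ∈ U, l ≤ r) : (upperBounds L ∩ lowerBounds U).Nonempty := by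
  obtain ⟨m, hm⟩ := hU.bddBelow
  refine ⟨sSup (insert m L), fun l hl => le_csSup (hL.insert m).bddAbove (mem_insert_of_mem _ hl),
    fun r hr => csSup_le (insert_nonempty _ _) ?_⟩
  rintro l (rfl | hl)
  exacts [hm hr, h l hl r hr]

theorem exists_forall_mul_le_iff {ι : Type*} {H : Set ι} (hH : H.Finite) (β u : ι → ℝ) :
    (∃ t, ∀ i ∈ H, β i * t ≤ u i) ↔
      (∀ i ∈ H, β i = 0 → 0 ≤ u i) ∧
        ∀ i ∈ H, 0 < β i → ∀ j ∈ H, β j < 0 → 0 ≤ -β j * u i + β i * u j := by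
  constructor
  · rintro ⟨t, ht⟩
    refine ⟨fun i hi h0 => by simpa [h0] using ht i hi, fun i hi hpos j hj hneg => ?_⟩
    have hi' := mul_le_mul_of_nonneg_left (ht i hi) (neg_nonneg.2 hneg.le)
    have hj' := mul_le_mul_of_nonneg_left (ht j hj) hpos.le
    linarith
  · rintro ⟨hzero, hpair⟩
    have hLU : ∀ l ∈ (fun j => u j / β j) '' {j ∈ H | β j < 0},
        ∀ r ∈ (fun i => u i / β i) '' {i ∈ H | 0 < β i}, l ≤ r := by
      refine forall_mem_image.2 fun j ⟨hj, hneg⟩ => forall_mem_image.2 fun i ⟨hi, hpos⟩ => ?_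
      have := hpair i hi hpos j hj hneg
      rw [div_le_iff_of_neg hneg, div_mul_eq_mul_div, div_le_iff₀ hpos]
      linarith
    obtain ⟨t, hlower, hupper⟩ := nonempty_upperBounds_inter_lowerBounds_of_finite
      ((hH.sep _).image _) ((hH.sep _).image _) hLU
    refine ⟨t, fun i hi => ?_⟩
    rcases lt_trichotomy (β i) 0 with hneg | h0 | hpos
    · have := (div_le_iff_of_neg hneg).1 (hlower (mem_image_of_mem _ ⟨hi, hneg⟩))
      linarith
    · simpa [h0] using hzero i hi h0
    · have := (le_div_iff₀ hpos).1 (hupper (mem_image_of_mem _ ⟨hi, hpos⟩))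
      linarith

section Polyhedral

variable {E F : Type*} [AddCommGroup E] [Module ℝ E] [AddCommGroup F] [Module ℝ F]

def IsPolyhedral (s : Set E) : Prop :=
  ∃ H : Set ((E →ₗ[ℝ] ℝ) × ℝ), H.Finite ∧ s = {x | ∀ h ∈ H, h.1 x ≤ h.2}

theorem isPolyhedral_setOf_le (f : E →ₗ[ℝ] ℝ) (c : ℝ) : IsPolyhedral {x | f x ≤ c} :=
  ⟨{(f, c)}, finite_singleton _, by simp⟩

theorem IsPolyhedral.inter {s t : Set E} (hs : IsPolyhedral s) (ht : IsPolyhedral t) :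
    IsPolyhedral (s ∩ t) := by
  obtain ⟨H, hH, rfl⟩ := hs
  obtain ⟨K, hK, rfl⟩ := ht
  exact ⟨H ∪ K, hH.union hK, by ext; simp [or_imp, forall_and]⟩

theorem IsPolyhedral.iInter {ι : Type*} [Finite ι] {s : ι → Set E}
    (hs : ∀ i, IsPolyhedral (s i)) : IsPolyhedral (⋂ i, s i) := by
  choose H hH hs using hs
  refine ⟨⋃ i, H i, finite_iUnion hH, ?_⟩
  ext
  simp only [mem_iInter, hs, mem_ofPred_eq, mem_iUnion, forall_exists_index]
  exact forall_comm

theorem isPolyhedral_setOf_eq (f : E →ₗ[ℝ] ℝ) (c : ℝ) : IsPolyhedral {x | f x = c} := by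
  convert (isPolyhedral_setOf_le f c).inter (isPolyhedral_setOf_le (-f) (-c)) using 1
  ext
  simp [le_antisymm_iff]

theorem IsPolyhedral.preimage {s : Set F} (hs : IsPolyhedral s) (L : E →ₗ[ℝ] F) :
    IsPolyhedral (L ⁻¹' s) := by
  obtain ⟨H, hH, rfl⟩ := hs
  refine ⟨(fun h => (h.1 ∘ₗ L, h.2)) '' H, hH.image _, ?_⟩
  ext
  simp only [mem_preimage, mem_ofPred_eq, forall_mem_image, LinearMap.comp_apply]

theorem isPolyhedral_singleton_zero [FiniteDimensional ℝ E] : IsPolyhedral ({0} : Set E) := by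
  have hzero : ({0} : Set E) = ⋂ i, {x | (Module.finBasis ℝ E).coord i x = 0} := by
    ext x
    simpa using ((Module.finBasis ℝ E).forall_coord_eq_zero_iff (x := x)).symm
  rw [hzero]
  exact .iInter fun i => isPolyhedral_setOf_eq _ _

theorem isPolyhedral_stdSimplex (ι : Type*) [Fintype ι] : IsPolyhedral (stdSimplex ℝ ι) := by
  rw [stdSimplex_eq_inter]
  refine .inter (.iInter fun i => ?_) ?_
  · simpa using isPolyhedral_setOf_le (-LinearMap.proj (R := ℝ) (φ := fun _ : ι => ℝ) i) 0
  · simpa using isPolyhedral_setOf_eq (∑ i, LinearMap.proj (R := ℝ) (φ := fun _ : ι => ℝ) i) 1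

theorem IsPolyhedral.image_fst {s : Set (E × ℝ)} (hs : IsPolyhedral s) :
    IsPolyhedral (Prod.fst '' s) := by
  obtain ⟨H, hH, rfl⟩ := hs
  -- Fourier–Motzkin: keep the constraints not involving the last coordinate, and add the
  -- combinations of two constraints with opposite signs on it in which it cancels.
  let β : (E × ℝ →ₗ[ℝ] ℝ) × ℝ → ℝ := fun h => h.1 (0, 1)
  let restrict : (E × ℝ →ₗ[ℝ] ℝ) × ℝ → (E →ₗ[ℝ] ℝ) × ℝ := fun h => (h.1 ∘ₗ .inl ℝ E ℝ, h.2)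
  refine ⟨restrict '' ({h ∈ H | β h = 0} ∪
      image2 (fun p q => (-β q) • p + β p • q) {p ∈ H | 0 < β p} {q ∈ H | β q < 0}),
    ((hH.sep _).union ((hH.sep _).image2 _ (hH.sep _))).image _, ?_⟩
  ext x
  have hsplit : ∀ (h : (E × ℝ →ₗ[ℝ] ℝ) × ℝ) (t : ℝ), h.1 (x, t) = h.1 (x, 0) + β h * t := by
    intro h t
    rw [show (x, t) = (x, 0) + t • ((0 : E), (1 : ℝ)) by simp, map_add, map_smul, smul_eq_mul,
      mul_comm]
  calc x ∈ Prod.fst '' {p | ∀ h ∈ H, h.1 p ≤ h.2}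
      ↔ ∃ t, ∀ h ∈ H, β h * t ≤ h.2 - h.1 (x, 0) := by
        simp only [mem_image, Prod.exists, exists_and_right, exists_eq_right, mem_ofPred_eq]
        refine exists_congr fun t => forall₂_congr fun h _ => ?_
        rw [hsplit, le_sub_iff_add_le']
    _ ↔ _ := exists_forall_mul_le_iff hH _ _
    _ ↔ _ := by
        simp only [mem_ofPred_eq, forall_mem_image, mem_union, or_imp, forall_and,
          forall_mem_image2, and_imp, restrict, LinearMap.comp_apply, LinearMap.inl_apply,
          Prod.fst_add, Prod.snd_add, Prod.smul_fst, Prod.smul_snd, LinearMap.add_apply,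
          LinearMap.smul_apply, smul_eq_mul, sub_nonneg]
        refine and_congr Iff.rfl (forall₂_congr fun p _ => forall_congr' fun _ =>
          forall₂_congr fun q _ => forall_congr' fun _ => ?_)
        constructor <;> intro h <;> linarith

theorem IsPolyhedral.image_fst_pi {n : ℕ} {s : Set (E × (Fin n → ℝ))} (hs : IsPolyhedral s) :
    IsPolyhedral (Prod.fst '' s) := by
  induction n with
  | zero =>
    have hs' : Prod.fst '' s = LinearMap.inl ℝ E (Fin 0 → ℝ) ⁻¹' s := by
      ext x
      constructor
      · rintro ⟨⟨y, t⟩, h, rfl⟩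
        rwa [Subsingleton.elim t 0] at h
      · exact fun h => ⟨_, h, rfl⟩
    rw [hs']
    exact hs.preimage _
  | succ n ih =>
    -- `((x, t), r) ↦ (x, Fin.cons r t)`
    let cons : (E × (Fin n → ℝ)) × ℝ →ₗ[ℝ] E × (Fin (n + 1) → ℝ) :=
      (LinearMap.fst ℝ E _ ∘ₗ LinearMap.fst ℝ _ ℝ).prod
        ((Fin.consLinearEquiv ℝ fun _ => ℝ).toLinearMap ∘ₗ
          (LinearMap.snd ℝ _ ℝ).prod (LinearMap.snd ℝ E _ ∘ₗ LinearMap.fst ℝ _ ℝ))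
    have hs' : Prod.fst '' s = Prod.fst '' (Prod.fst '' (cons ⁻¹' s)) := by
      ext x
      constructor
      · rintro ⟨⟨y, t⟩, h, rfl⟩
        refine ⟨(y, Fin.tail t), ⟨((y, Fin.tail t), t 0), ?_, rfl⟩, rfl⟩
        simpa [cons, Fin.consLinearEquiv, Fin.consEquiv] using h
      · rintro ⟨_, ⟨p, hp, rfl⟩, rfl⟩
        exact ⟨cons p, hp, rfl⟩
    rw [hs']
    exact ih (hs.preimage cons).image_fst

theorem IsPolyhedral.image [FiniteDimensional ℝ E] [FiniteDimensional ℝ F] {s : Set F}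
    (hs : IsPolyhedral s) (L : F →ₗ[ℝ] E) : IsPolyhedral (L '' s) := by
  let e : (Fin (Module.finrank ℝ F) → ℝ) →ₗ[ℝ] F := (Module.finBasis ℝ F).equivFun.symm
  let fst := LinearMap.fst ℝ E (Fin (Module.finrank ℝ F) → ℝ)
  let snd := LinearMap.snd ℝ E (Fin (Module.finrank ℝ F) → ℝ)
  have hgraph : L '' s = Prod.fst '' ((e ∘ₗ snd) ⁻¹' s ∩ (fst - L ∘ₗ e ∘ₗ snd) ⁻¹' {0}) := by
    ext x
    constructor
    · rintro ⟨y, hy, rfl⟩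
      exact ⟨(L y, (Module.finBasis ℝ F).equivFun y), by simpa [e, fst, snd] using hy, rfl⟩
    · rintro ⟨⟨_, t⟩, ⟨ht, hgraph⟩, rfl⟩
      exact ⟨e t, ht, (sub_eq_zero.1 hgraph).symm⟩
  rw [hgraph]
  exact ((hs.preimage _).inter (isPolyhedral_singleton_zero.preimage _)).image_fst_pi

theorem Set.Finite.isPolyhedral_convexHull [FiniteDimensional ℝ E] {s : Set E} (hs : s.Finite) :
    IsPolyhedral (convexHull ℝ s) := by
  let := hs.fintype
  rw [hs.convexHull_eq_image]
  exact (isPolyhedral_stdSimplex _).image _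

def IsHalfSpaceInter (P : Set E) : Prop :=
  ∃ (k : ℕ) (f : Fin k → (E →ₗ[ℝ] ℝ)) (c : Fin k → ℝ) (strict : Fin k → Bool),
    (∀ j, f j ≠ 0) ∧ P = ⋂ j, (if strict j then {v | f j v < c j} else {v | f j v ≤ c j})

theorem exists_halfSpaceInter_cover_forall_le_iff {ι : Type*} [Finite ι]
    (g : ι → E →ₗ[ℝ] ℝ) (c : ι → ℝ) (hg : ∀ i, g i ≠ 0) :
    ∃ (m : ℕ) (P : Fin m → Set E), (∀ b, IsHalfSpaceInter (P b)) ∧ (⋃ b, P b) = univ ∧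
      ∀ b, ∀ x ∈ P b, ∀ y ∈ P b, ∀ i, (g i x ≤ c i ↔ g i y ≤ c i) := by
  let e := (Finite.equivFin ι).symm
  -- the cell of a sign vector `σ`: `g i ≤ c i` where `σ i`, and `-g i < -c i` elsewhere
  let f (σ : ι → Bool) (j : Fin (Nat.card ι)) := if σ (e j) then g (e j) else -g (e j)
  let d (σ : ι → Bool) (j : Fin (Nat.card ι)) := if σ (e j) then c (e j) else -c (e j)
  let cell (σ : ι → Bool) : Set E :=
    ⋂ j, if !σ (e j) then {v | f σ j v < d σ j} else {v | f σ j v ≤ d σ j}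
  have mem_cell (σ : ι → Bool) (x : E) : x ∈ cell σ ↔ ∀ i, (g i x ≤ c i ↔ σ i) := by
    simp only [cell, mem_iInter, e.forall_congr_left]
    refine forall_congr' fun i => ?_
    simp only [f, d, Equiv.apply_symm_apply]
    cases σ i <;> simp
  let σ := (Finite.equivFin (ι → Bool)).symm
  refine ⟨_, fun b => cell (σ b), fun b => ⟨_, f (σ b), d (σ b), fun j => !σ b (e j),
    fun j => ?_, rfl⟩, eq_univ_of_forall fun x => mem_iUnion.2 ?_,
    fun b x hx y hy i => ((mem_cell _ x).1 hx i).trans ((mem_cell _ y).1 hy i).symm⟩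
  · by_cases h : σ b (e j) <;> simp [f, h, hg]
  · exact ⟨σ.symm fun i => decide (g i x ≤ c i), by simp [mem_cell]⟩

theorem exists_halfSpaceInter_cover_forall_mem_iff {A : Type*} [Finite A] {s : A → Set E}
    (hs : ∀ a, IsPolyhedral (s a)) :
    ∃ (m : ℕ) (P : Fin m → Set E), (∀ b, IsHalfSpaceInter (P b)) ∧ (⋃ b, P b) = univ ∧
      ∀ b, ∀ x ∈ P b, ∀ y ∈ P b, ∀ a, (x ∈ s a ↔ y ∈ s a) := by
  choose H hH hs using hs
  let ι := {h | h ∈ ⋃ a, H a ∧ h.1 ≠ 0}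
  have : Finite ι := ((finite_iUnion hH).subset fun _ h => h.1).to_subtype
  obtain ⟨m, P, hP, hcover, hconst⟩ :=
    exists_halfSpaceInter_cover_forall_le_iff (fun h : ι => h.1.1) (fun h => h.1.2) (fun h => h.2.2)
  refine ⟨m, P, hP, hcover, fun b x hx y hy a => ?_⟩
  simp only [hs a, mem_ofPred_eq]
  refine forall₂_congr fun h hh => ?_
  by_cases h0 : h.1 = 0
  · simp [h0]
  · exact hconst b x hx y hy ⟨h, mem_iUnion.2 ⟨a, hh⟩, h0⟩

end Polyhedral

theorem sum_indicator_polytopes_plConstructible_general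
    {V : Type*} [NormedAddCommGroup V] [NormedSpace ℝ V] [FiniteDimensional ℝ V]
    {A : Type*} [Fintype A] (C : A → ℤ) (S : A → Finset V) :
    ∃ (m : ℕ) (P : Fin m → Set V),
      (∀ b, ∃ (k : ℕ) (f : Fin k → (V →ₗ[ℝ] ℝ)) (c : Fin k → ℝ) (strict : Fin k → Bool),
        (∀ j, f j ≠ 0) ∧
        P b = ⋂ j, (if strict j then {v : V | f j v < c j} else {v : V | f j v ≤ c j})) ∧
      (⋃ b, P b) = Set.univ ∧
      ∀ b, ∀ x ∈ P b, ∀ y ∈ P b,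
        ∑ a, C a * (convexHull ℝ ((S a : Set V))).indicator 1 x =
        ∑ a, C a * (convexHull ℝ ((S a : Set V))).indicator 1 y := by
  obtain ⟨m, P, hP, hcover, hconst⟩ := exists_halfSpaceInter_cover_forall_mem_iff
    fun a => (S a).finite_toSet.isPolyhedral_convexHull
  refine ⟨m, P, hP, hcover, fun b x hx y hy => Finset.sum_congr rfl fun a _ => ?_⟩
  rw [indicator_eq_indicator (g := 1) (hconst b x hx y hy a) rfl]

/-- **Integer combinations of indicators of compact convex polytopes are
PL-constructible.** Given finitely many compact convex polytopes `X_α` (convex hulls of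
nonempty finite sets) and integers `C_α`, the function `φ = Σ_α C_α · 1_{X_α}` is
PL-constructible: there is a finite covering of `V` by locally closed sets, each a
finite intersection of open or closed affine half-spaces (with nonzero linear
functionals), on each of which `φ` is constant. -/
theorem sum_indicator_polytopes_plConstructible
    {V : Type*} [NormedAddCommGroup V] [NormedSpace ℝ V] [FiniteDimensional ℝ V]
    {A : Type*} [Fintype A] (C : A → ℤ) (S : A → Finset V) (hS : ∀ a, (S a).Nonempty) :
    ∃ (m : ℕ) (P : Fin m → Set V),
      (∀ b, ∃ (k : ℕ) (f : Fin k → (V →ₗ[ℝ] ℝ)) (c : Fin k → ℝ) (strict : Fin k → Bool),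
        (∀ j, f j ≠ 0) ∧
        P b = ⋂ j, (if strict j then {v : V | f j v < c j} else {v : V | f j v ≤ c j})) ∧
      (⋃ b, P b) = Set.univ ∧
      ∀ b, ∀ x ∈ P b, ∀ y ∈ P b,
        ∑ a, C a * (convexHull ℝ ((S a : Set V))).indicator 1 x =
        ∑ a, C a * (convexHull ℝ ((S a : Set V))).indicator 1 y :=
  sum_indicator_polytopes_plConstructible_general C S
end

section
/- Let V and W be finite-dimensional real normed vector spaces and let f : V → W be an affine map. Let A be a finite index set, C_α ∈ ℤ, and let (X_α)_{α∈A} be nonempty compact convex subsets of V such that Σ_{α∈A} C_α·1_{X_α}(v) = 0 for all v ∈ V. Then Σ_{α∈A} C_α·1_{f(X_α)}(w) = 0 for all w ∈ W. Consequently, for φ in the subgroup of functions V → ℤ generated by indicators of nonempty compact convex sets, the pushforward f_*φ, defined from any decomposition φ = Σ_α C_α·1_{X_α} by f_*φ = Σ_α C_α·1_{f(X_α)}, is independent of the chosen decomposition, and its Euler integral satisfies ∫ f_*φ = ∫ φ. -/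
/-- The subgroup of `V → ℤ` generated by indicator functions of nonempty compact
convex subsets of `V`. -/
def cfGroup (V : Type*) [NormedAddCommGroup V] [NormedSpace ℝ V] : AddSubgroup (V → ℤ) :=
  AddSubgroup.closure
    {g : V → ℤ | ∃ X : Set V, X.Nonempty ∧ IsCompact X ∧ Convex ℝ X ∧ g = X.indicator 1}

/-!
The Euler characteristic, `χ K = 1` for nonempty compact convex `K` and `χ ∅ = 0`, extends
additively to integer combinations of indicators: a vanishing combination `∑ C_a 1_{K_a}` has
`∑_{K_a ≠ ∅} C_a = 0` (Groemer). On `ℝ`, comparing the combination at `t` with its value just to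
the right of `t` isolates the sets whose maximum is `t`, so the coefficients of each such fibre
add up to zero. Slicing `U₁ × U₂` along the first factor reduces the statement there to the one
on `U₂` and then, for the projections, to the one on `U₁`; so it holds on every `Fin n → ℝ`, and
hence on every finite-dimensional space.

For affine `f`, the value of `∑ C_a 1_{f(X_a)}` at `w` is the Euler characteristic of the
vanishing combination `∑ C_a 1_{X_a ∩ f⁻¹(w)}`, hence zero. Both Euler integrals in the last
claim equal `∑ C_a`.
-/

open Finset Filter Topology
open scoped Classical

universe u

lemma sum_mul_indicator_one {ι α R : Type*} [Fintype ι] [NonAssocSemiring R] (C : ι → R)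
    (S : ι → Set α) (x : α) : ∑ i, C i * (S i).indicator 1 x = ∑ i with x ∈ S i, C i := by
  simp [Set.indicator_apply, Finset.sum_filter]

def EulerCharWellDefined (V : Type*) [NormedAddCommGroup V] [NormedSpace ℝ V] : Prop :=
  ∀ (A : Type u) [Fintype A] (C : A → ℤ) (K : A → Set V), (∀ a, IsCompact (K a)) →
    (∀ a, Convex ℝ (K a)) → (∀ v, ∑ a, C a * (K a).indicator 1 v = 0) →
    ∑ a with (K a).Nonempty, C a = 0

section
variable {V W : Type*} [NormedAddCommGroup V] [NormedSpace ℝ V] [NormedAddCommGroup W]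
  [NormedSpace ℝ W]

lemma eulerCharWellDefined_of_subsingleton [Subsingleton V] : EulerCharWellDefined.{u} V := by
  intro A _ C K _ _ hrel
  have hmem : ∀ a, (K a).Nonempty ↔ (0 : V) ∈ K a :=
    fun a => ⟨fun ⟨x, hx⟩ => Subsingleton.elim x 0 ▸ hx, fun h => ⟨0, h⟩⟩
  simpa [sum_mul_indicator_one, hmem] using hrel 0

lemma EulerCharWellDefined.equiv (h : EulerCharWellDefined.{u} V) (e : V ≃L[ℝ] W) :
    EulerCharWellDefined.{u} W := by
  intro A _ C K hcpt hcvx hrel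
  have := h A C (fun a => e ⁻¹' K a) (fun a => e.toHomeomorph.isCompact_preimage.2 (hcpt a))
    (fun a => (hcvx a).linear_preimage (e : V →ₗ[ℝ] W))
    (fun v => by simpa [sum_mul_indicator_one] using hrel (e v))
  simpa [e.surjective.nonempty_preimage] using this

lemma EulerCharWellDefined.prod (h₁ : EulerCharWellDefined.{u} V)
    (h₂ : EulerCharWellDefined.{u} W) : EulerCharWellDefined.{u} (V × W) := by
  intro A _ C K hcpt hcvx hrel
  have hslice : ∀ t : V, ∑ a, C a * (Prod.fst '' K a).indicator 1 t = 0 := by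
    intro t
    have hcpt_slice : ∀ a, IsCompact (Prod.mk t ⁻¹' K a) := fun a =>
      ((hcpt a).image continuous_snd).of_isClosed_subset
        ((hcpt a).isClosed.preimage (.prodMk_right t)) fun w hw => ⟨_, hw, rfl⟩
    have hcvx_slice : ∀ a, Convex ℝ (Prod.mk t ⁻¹' K a) := fun a =>
      (hcvx a).affine_preimage ((AffineMap.const ℝ W t).prod (AffineMap.id ℝ W))
    have := h₂ A C _ hcpt_slice hcvx_slice fun w => by
      simpa [sum_mul_indicator_one] using hrel (t, w)
    simpa [sum_mul_indicator_one, Set.Nonempty] using this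
  simpa using h₁ A C _ (fun a => (hcpt a).image continuous_fst)
    (fun a => (hcvx a).linear_image (LinearMap.fst ℝ V W)) hslice

end

lemma eventually_indicator_nhdsGT {K : Set ℝ} (hclosed : IsClosed K) (hconv : K.OrdConnected)
    (t : ℝ) :
    ∀ᶠ s in 𝓝[>] t, (K.indicator 1 s : ℤ) = K.indicator 1 t - if IsGreatest K t then 1 else 0 := by
  by_cases ht : t ∈ K
  · by_cases hmax : IsGreatest K t
    · filter_upwards [self_mem_nhdsWithin] with s (hs : t < s)
      have : s ∉ K := fun h => (hmax.2 h).not_gt hs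
      simp [this, ht, hmax]
    · obtain ⟨u, hu, htu⟩ : ∃ u ∈ K, t < u := by simpa [IsGreatest, ht, upperBounds] using hmax
      filter_upwards [Ioo_mem_nhdsGT htu] with s hs
      simp [hconv.out ht hu (Set.Ioo_subset_Icc_self hs), ht, hmax]
  · filter_upwards [mem_nhdsWithin_of_mem_nhds (hclosed.isOpen_compl.mem_nhds ht)]
      with s (hs : s ∉ K)
    have hmax : ¬IsGreatest K t := fun h => ht h.1
    simp [hs, ht, hmax]

lemma sum_isGreatest_eq_zero {A : Type*} [Fintype A] (C : A → ℤ) (K : A → Set ℝ)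
    (hclosed : ∀ a, IsClosed (K a)) (hconv : ∀ a, (K a).OrdConnected)
    (hrel : ∀ s, ∑ a, C a * (K a).indicator 1 s = 0) (t : ℝ) :
    ∑ a with IsGreatest (K a) t, C a = 0 := by
  obtain ⟨s, hs⟩ :=
    (eventually_all.2 fun a => eventually_indicator_nhdsGT (hclosed a) (hconv a) t).exists
  have := hrel s
  simpa [hs, mul_sub, sum_sub_distrib, hrel t, Finset.sum_filter] using this

lemma eulerCharWellDefined_real : EulerCharWellDefined.{u} ℝ := by
  intro A _ C K hcpt hcvx hrel
  have hfiber : ∀ t, ∑ a with (K a).Nonempty ∧ sSup (K a) = t, C a = 0 := by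
    intro t
    rw [← sum_isGreatest_eq_zero C K (fun a => (hcpt a).isClosed)
      (fun a => (hcvx a).ordConnected) hrel t]
    refine Finset.sum_congr (Finset.filter_congr fun a _ => ?_) fun _ _ => rfl
    exact ⟨fun ⟨hne, hsup⟩ => hsup ▸ (hcpt a).isGreatest_sSup hne,
      fun h => ⟨⟨t, h.1⟩, h.csSup_eq⟩⟩
  let M : A → ℝ := fun a => sSup (K a)
  rw [← Finset.sum_fiberwise_of_maps_to (g := M) fun a ha => Finset.mem_image_of_mem M ha]
  exact Finset.sum_eq_zero fun t _ => by rw [Finset.filter_filter]; exact hfiber t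

theorem eulerCharWellDefined_pi_fin : ∀ n : ℕ, EulerCharWellDefined.{u} (Fin n → ℝ)
  | 0 => eulerCharWellDefined_of_subsingleton
  | n + 1 => (eulerCharWellDefined_real.prod (eulerCharWellDefined_pi_fin n)).equiv
      (Fin.consLinearEquiv ℝ fun _ => ℝ).toContinuousLinearEquiv

theorem eulerCharWellDefined_of_finiteDimensional (V : Type*) [NormedAddCommGroup V]
    [NormedSpace ℝ V] [FiniteDimensional ℝ V] : EulerCharWellDefined.{u} V :=
  (eulerCharWellDefined_pi_fin _).equiv
    (Module.finBasis ℝ V).equivFun.symm.toContinuousLinearEquiv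

section
variable {V W : Type*} [NormedAddCommGroup V] [NormedSpace ℝ V] [FiniteDimensional ℝ V]
  [NormedAddCommGroup W] [NormedSpace ℝ W]

theorem sum_mul_indicator_image_eq_zero (f : V →ᵃ[ℝ] W) {A : Type*} [Fintype A] (C : A → ℤ)
    (X : A → Set V) (hcpt : ∀ a, IsCompact (X a)) (hcvx : ∀ a, Convex ℝ (X a))
    (hrel : ∀ v, ∑ a, C a * (X a).indicator 1 v = 0) (w : W) :
    ∑ a, C a * (f '' X a).indicator 1 w = 0 := by
  have hfiber := eulerCharWellDefined_of_finiteDimensional V A C (fun a => X a ∩ f ⁻¹' {w})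
    (fun a => (hcpt a).inter_right
      (isClosed_singleton.preimage f.continuous_of_finiteDimensional))
    (fun a => (hcvx a).inter ((convex_singleton w).affine_preimage f))
    fun v => by
      by_cases hv : f v = w
      · simpa [sum_mul_indicator_one, hv] using hrel v
      · simp [hv]
  simpa [sum_mul_indicator_one, Set.Nonempty, and_comm] using hfiber

theorem sum_mul_indicator_image_eq_of_eq (f : V →ᵃ[ℝ] W) {A B : Type*} [Fintype A] [Fintype B]
    (C : A → ℤ) (X : A → Set V) (D : B → ℤ) (Y : B → Set V)
    (hXcpt : ∀ a, IsCompact (X a)) (hXcvx : ∀ a, Convex ℝ (X a))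
    (hYcpt : ∀ b, IsCompact (Y b)) (hYcvx : ∀ b, Convex ℝ (Y b))
    (hrel : ∀ v, ∑ a, C a * (X a).indicator 1 v = ∑ b, D b * (Y b).indicator 1 v) (w : W) :
    ∑ a, C a * (f '' X a).indicator 1 w = ∑ b, D b * (f '' Y b).indicator 1 w := by
  have hdiff := sum_mul_indicator_image_eq_zero f (Sum.elim C (-D)) (Sum.elim X Y)
    (Sum.forall.2 ⟨hXcpt, hYcpt⟩) (Sum.forall.2 ⟨hXcvx, hYcvx⟩)
    (fun v => by simp [Fintype.sum_sum_type, hrel v]) w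
  simpa [Fintype.sum_sum_type, add_neg_eq_zero] using hdiff

end

theorem apply_sum_mul_indicator_eq_sum {V : Type*} [NormedAddCommGroup V] [NormedSpace ℝ V]
    (I : cfGroup V →+ ℤ)
    (hI : ∀ S : Set V, S.Nonempty → IsCompact S → Convex ℝ S →
      ∀ hmem : (S.indicator 1 : V → ℤ) ∈ cfGroup V, I ⟨S.indicator 1, hmem⟩ = 1)
    {A : Type*} [Fintype A] (C : A → ℤ) (X : A → Set V)
    (hne : ∀ a, (X a).Nonempty) (hcpt : ∀ a, IsCompact (X a)) (hcvx : ∀ a, Convex ℝ (X a))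
    (hφ : (fun v => ∑ a, C a * (X a).indicator 1 v) ∈ cfGroup V) :
    I ⟨fun v => ∑ a, C a * (X a).indicator 1 v, hφ⟩ = ∑ a, C a := by
  have hmem : ∀ a, ((X a).indicator 1 : V → ℤ) ∈ cfGroup V := fun a =>
    AddSubgroup.subset_closure ⟨X a, hne a, hcpt a, hcvx a, rfl⟩
  have hdecomp : (⟨fun v => ∑ a, C a * (X a).indicator 1 v, hφ⟩ : cfGroup V) =
      ∑ a, C a • ⟨(X a).indicator 1, hmem a⟩ := by
    ext v
    simp [Finset.sum_apply]
  simp [hdecomp, hI _ (hne _) (hcpt _) (hcvx _)]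

theorem pushforward_constructible_well_defined_general
    {V W : Type*} [NormedAddCommGroup V] [NormedSpace ℝ V] [FiniteDimensional ℝ V]
    [NormedAddCommGroup W] [NormedSpace ℝ W]
    (f : V →ᵃ[ℝ] W)
    {A : Type*} [Fintype A] (C : A → ℤ) (X : A → Set V)
    (hXne : ∀ a, (X a).Nonempty) (hXcpt : ∀ a, IsCompact (X a))
    (hXcvx : ∀ a, Convex ℝ (X a)) :
    ((∀ v : V, ∑ a, C a * (X a).indicator 1 v = 0) →
      ∀ w : W, ∑ a, C a * (f '' X a).indicator 1 w = 0) ∧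
    (∀ (B : Type) [Fintype B], ∀ (D : B → ℤ) (Y : B → Set V),
      (∀ b, (Y b).Nonempty) → (∀ b, IsCompact (Y b)) → (∀ b, Convex ℝ (Y b)) →
      (∀ v : V, ∑ a, C a * (X a).indicator 1 v = ∑ b, D b * (Y b).indicator 1 v) →
      ∀ w : W, ∑ a, C a * (f '' X a).indicator 1 w = ∑ b, D b * (f '' Y b).indicator 1 w) ∧
    (∀ (IV : cfGroup V →+ ℤ) (IW : cfGroup W →+ ℤ),
      (∀ (S : Set V), S.Nonempty → IsCompact S → Convex ℝ S →
        ∀ hmem : (S.indicator 1 : V → ℤ) ∈ cfGroup V, IV ⟨S.indicator 1, hmem⟩ = 1) →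
      (∀ (S : Set W), S.Nonempty → IsCompact S → Convex ℝ S →
        ∀ hmem : (S.indicator 1 : W → ℤ) ∈ cfGroup W, IW ⟨S.indicator 1, hmem⟩ = 1) →
      ∀ (hφ : (fun v : V => ∑ a, C a * (X a).indicator 1 v) ∈ cfGroup V)
        (hfφ : (fun w : W => ∑ a, C a * (f '' X a).indicator 1 w) ∈ cfGroup W),
        IW ⟨fun w : W => ∑ a, C a * (f '' X a).indicator 1 w, hfφ⟩ =
        IV ⟨fun v : V => ∑ a, C a * (X a).indicator 1 v, hφ⟩) := by
  refine ⟨sum_mul_indicator_image_eq_zero f C X hXcpt hXcvx,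
    fun B _ D Y _ hYcpt hYcvx hrel =>
      sum_mul_indicator_image_eq_of_eq f C X D Y hXcpt hXcvx hYcpt hYcvx hrel, ?_⟩
  intro IV IW hIV hIW hφ hfφ
  rw [apply_sum_mul_indicator_eq_sum IV hIV C X hXne hXcpt hXcvx hφ,
    apply_sum_mul_indicator_eq_sum IW hIW C (f '' X ·) (fun a => (hXne a).image f)
      (fun a => (hXcpt a).image f.continuous_of_finiteDimensional)
      (fun a => (hXcvx a).affine_image f) hfφ]

/-- **Pushforward of constructible functions along affine maps.**
If `Σ_α C_α · 1_{X_α} = 0` pointwise for nonempty compact convex sets `X_α ⊆ V` and an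
affine map `f : V → W`, then `Σ_α C_α · 1_{f(X_α)} = 0` pointwise. Consequently the
pushforward `f_*φ` is independent of the chosen decomposition of `φ`, and every Euler
integral (group homomorphism sending indicators of nonempty compact convex sets to `1`)
satisfies `∫ f_*φ = ∫ φ`. -/
theorem pushforward_constructible_well_defined
    {V W : Type*} [NormedAddCommGroup V] [NormedSpace ℝ V] [FiniteDimensional ℝ V]
    [NormedAddCommGroup W] [NormedSpace ℝ W] [FiniteDimensional ℝ W]
    (f : V →ᵃ[ℝ] W)
    {A : Type*} [Fintype A] (C : A → ℤ) (X : A → Set V)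
    (hXne : ∀ a, (X a).Nonempty) (hXcpt : ∀ a, IsCompact (X a))
    (hXcvx : ∀ a, Convex ℝ (X a)) :
    ((∀ v : V, ∑ a, C a * (X a).indicator 1 v = 0) →
      ∀ w : W, ∑ a, C a * (f '' X a).indicator 1 w = 0) ∧
    (∀ (B : Type) [Fintype B], ∀ (D : B → ℤ) (Y : B → Set V),
      (∀ b, (Y b).Nonempty) → (∀ b, IsCompact (Y b)) → (∀ b, Convex ℝ (Y b)) →
      (∀ v : V, ∑ a, C a * (X a).indicator 1 v = ∑ b, D b * (Y b).indicator 1 v) →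
      ∀ w : W, ∑ a, C a * (f '' X a).indicator 1 w = ∑ b, D b * (f '' Y b).indicator 1 w) ∧
    (∀ (IV : cfGroup V →+ ℤ) (IW : cfGroup W →+ ℤ),
      (∀ (S : Set V), S.Nonempty → IsCompact S → Convex ℝ S →
        ∀ hmem : (S.indicator 1 : V → ℤ) ∈ cfGroup V, IV ⟨S.indicator 1, hmem⟩ = 1) →
      (∀ (S : Set W), S.Nonempty → IsCompact S → Convex ℝ S →
        ∀ hmem : (S.indicator 1 : W → ℤ) ∈ cfGroup W, IW ⟨S.indicator 1, hmem⟩ = 1) →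
      ∀ (hφ : (fun v : V => ∑ a, C a * (X a).indicator 1 v) ∈ cfGroup V)
        (hfφ : (fun w : W => ∑ a, C a * (f '' X a).indicator 1 w) ∈ cfGroup W),
        IW ⟨fun w : W => ∑ a, C a * (f '' X a).indicator 1 w, hfφ⟩ =
        IV ⟨fun v : V => ∑ a, C a * (X a).indicator 1 v, hφ⟩) :=
  pushforward_constructible_well_defined_general f C X hXne hXcpt hXcvx
end
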